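/- Let A be an abelian category and Δ: Pr(A) → Pr(A^op) the duality assignment sending a preradical τ to (τ*)^op. Then for any preradicals τ, σ of A: Δ(σ:τ) = Δ(τ)·Δ(σ) and Δ(τ·σ) = (Δ(σ):Δ(τ)). -/

import Mathlib

/-
`Δτ` is represented by the opposite of the cokernel projection `1 ↠ T*`, and `τᵒᵖ : 1 ⟶ Tᵒᵖ` is
a cokernel of it. More generally `Δ` sends a kernel of an epimorphism `k : 1 ↠ G` to `kᵒᵖ`, since in
an abelian category `k` is the cokernel of its kernel. Hence the coproduct `(σ:τ)`, the kernel of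
`1 ↠ S* ↠ T*S*`, is sent to the composite `(T*S*)ᵒᵖ ⟶ S*ᵒᵖ ⟶ 1` representing `Δτ·Δσ`. Dually,
`τ·σ` is represented by the monomorphism `m : TS ↪ 1`, so `Δ(τ·σ)` is the opposite of the cokernel
projection of `m`, i.e. the kernel of `mᵒᵖ = σᵒᵖ ≫ Sᵒᵖτᵒᵖ`, the map defining `(Δσ:Δτ)`.
-/
open CategoryTheory CategoryTheory.Limits

universe v u

variable {A : Type u} [Category.{v} A] [Abelian A]

/-- The product `τ·σ` of preradicals, represented by `σ ∘ τS : TS ⟶ 1`. -/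
noncomputable def preradProd {C : Type u} [Category.{v} C] [Abelian C]
    (τ σ : Subobject (𝟭 C)) : Subobject (𝟭 C) :=
  imageSubobject
    ((Functor.whiskerLeft (σ : C ⥤ C) τ.arrow ≫ σ.arrow :
      (σ : C ⥤ C) ⋙ (τ : C ⥤ C) ⟶ 𝟭 C))

/-- The coproduct `(σ:τ)` of preradicals: `Ker(1 ⟶ S* ⟶ T*S*)`. -/
noncomputable def preradCoprod {C : Type u} [Category.{v} C] [Abelian C]
    (σ τ : Subobject (𝟭 C)) : Subobject (𝟭 C) :=
  kernelSubobject
    (cokernel.π σ.arrow ≫ Functor.whiskerLeft (cokernel σ.arrow) (cokernel.π τ.arrow) :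
      𝟭 C ⟶ cokernel σ.arrow ⋙ cokernel τ.arrow)

/-- The duality assignment `Δ : Pr(A) → Pr(Aᵒᵖ)`, `τ ↦ (τ*)ᵒᵖ`. -/
noncomputable def preradDelta (τ : Subobject (𝟭 A)) : Subobject (𝟭 Aᵒᵖ) :=
  imageSubobject
    ((NatTrans.op (cokernel.π τ.arrow)) : (cokernel τ.arrow).op ⟶ 𝟭 Aᵒᵖ)

namespace CategoryTheory

variable {C D E : Type*} [Category C] [Category D] [Category E]

instance Functor.mono_whiskerLeft [HasPullbacks E] (F : C ⥤ D) {G H : D ⥤ E} (α : G ⟶ H)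
    [Mono α] : Mono (Functor.whiskerLeft F α) :=
  (NatTrans.mono_iff_mono_app _).2 fun X => inferInstanceAs (Mono (α.app (F.obj X)))

instance Functor.epi_whiskerLeft [HasPushouts E] (F : C ⥤ D) {G H : D ⥤ E} (α : G ⟶ H)
    [Epi α] : Epi (Functor.whiskerLeft F α) :=
  (NatTrans.epi_iff_epi_app _).2 fun X => inferInstanceAs (Epi (α.app (F.obj X)))

instance NatTrans.mono_op {F G : C ⥤ D} (f : F ⟶ G) [Epi f] : Mono (NatTrans.op f) :=
  inferInstanceAs (Mono ((Functor.opUnopEquiv C D).functor.map f.op))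

@[simp]
lemma NatTrans.op_zero [HasZeroMorphisms D] (F G : C ⥤ D) : NatTrans.op (0 : F ⟶ G) = 0 := rfl

section
variable [HasZeroMorphisms D] {F G H : C ⥤ D}

noncomputable def NatTrans.isLimitKernelForkOp {f : F ⟶ G} {c : CokernelCofork f}
    (hc : IsColimit c) :
    IsLimit (KernelFork.ofι (NatTrans.op c.π)
      (by rw [← NatTrans.op_comp, c.condition, NatTrans.op_zero]) :
      KernelFork (NatTrans.op f)) :=
  isLimitForkMapOfIsLimit' (Functor.opUnopEquiv C D).functor _
    (CokernelCofork.IsColimit.ofπOp c.π c.condition (hc.ofIsoColimit (Cofork.isoCoforkOfπ c)))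

noncomputable def NatTrans.isColimitCokernelCoforkOp {g : G ⟶ H} {c : KernelFork g}
    (hc : IsLimit c) :
    IsColimit (CokernelCofork.ofπ (NatTrans.op c.ι)
      (by rw [← NatTrans.op_comp, c.condition, NatTrans.op_zero]) :
      CokernelCofork (NatTrans.op g)) :=
  isColimitCoforkMapOfIsColimit' (Functor.opUnopEquiv C D).functor _
    (KernelFork.IsLimit.ofιOp c.ι c.condition (hc.ofIsoLimit (Fork.isoForkOfι c)))

end

namespace Subobject

variable [HasZeroMorphisms C] {X Y Z : C}

noncomputable def isColimitCokernelCoforkMkArrow (f : X ⟶ Y) [Mono f] {c : CokernelCofork f}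
    (hc : IsColimit c) :
    IsColimit (CokernelCofork.ofπ c.π
      (by rw [← underlyingIso_hom_comp_eq_mk, Category.assoc, c.condition, comp_zero]) :
      CokernelCofork (mk f).arrow) :=
  isCokernelEpiComp hc (underlyingIso f).hom (underlyingIso_hom_comp_eq_mk f).symm

end Subobject

namespace Limits

variable [HasZeroMorphisms C] {X Y Z : C}

lemma kernelSubobject_eq_mk_of_isLimit {f : Y ⟶ Z} [HasKernel f] (i : X ⟶ Y) [Mono i]
    {w : i ≫ f = 0} (hi : IsLimit (KernelFork.ofι i w)) : kernelSubobject f = Subobject.mk i :=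
  Subobject.mk_eq_mk_of_comm _ _ (IsLimit.conePointUniqueUpToIso (limit.isLimit _) hi)
    (IsLimit.conePointUniqueUpToIso_hom_comp _ _ WalkingParallelPair.zero)

end Limits

end CategoryTheory

open Subobject

lemma preradProd_eq_mk (τ σ : Subobject (𝟭 A)) :
    preradProd τ σ = Subobject.mk (Functor.whiskerLeft (σ : A ⥤ A) τ.arrow ≫ σ.arrow) :=
  imageSubobject_mono _

lemma preradProd_mk {F G : A ⥤ A} (f : F ⟶ 𝟭 A) (g : G ⟶ 𝟭 A) [Mono f] [Mono g] :
    preradProd (Subobject.mk f) (Subobject.mk g) =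
      Subobject.mk (Functor.whiskerLeft G f ≫ g) := by
  refine (preradProd_eq_mk _ _).trans (mk_eq_mk_of_comm _ _
    (Functor.isoWhiskerRight (underlyingIso g) _ ≪≫ Functor.isoWhiskerLeft G (underlyingIso f)) ?_)
  rw [Iso.trans_hom, Functor.isoWhiskerRight_hom, Functor.isoWhiskerLeft_hom, Category.assoc,
    ← Functor.whiskerLeft_comp_assoc, underlyingIso_hom_comp_eq_mk,
    ← Functor.whiskerLeft_comp_whiskerRight_assoc]
  exact congrArg _ (underlyingIso_hom_comp_eq_mk g)

lemma preradCoprod_eq_kernelSubobject {σ τ : Subobject (𝟭 A)} {cσ : CokernelCofork σ.arrow}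
    {cτ : CokernelCofork τ.arrow} (hσ : IsColimit cσ) (hτ : IsColimit cτ) :
    preradCoprod σ τ = kernelSubobject (cσ.π ≫ Functor.whiskerLeft cσ.pt cτ.π) := by
  let eσ := IsColimit.coconePointUniqueUpToIso (colimit.isColimit _) hσ
  let eτ := IsColimit.coconePointUniqueUpToIso (colimit.isColimit _) hτ
  have hπσ : cokernel.π σ.arrow ≫ eσ.hom = cσ.π :=
    IsColimit.comp_coconePointUniqueUpToIso_hom _ hσ WalkingParallelPair.one
  have hπτ : cokernel.π τ.arrow ≫ eτ.hom = cτ.π :=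
    IsColimit.comp_coconePointUniqueUpToIso_hom _ hτ WalkingParallelPair.one
  have key : cσ.π ≫ Functor.whiskerLeft cσ.pt cτ.π =
      (cokernel.π σ.arrow ≫ Functor.whiskerLeft (cokernel σ.arrow) (cokernel.π τ.arrow)) ≫
        Functor.whiskerLeft _ eτ.hom ≫ Functor.whiskerRight eσ.hom _ := by
    rw [← hπσ, ← hπτ]
    ext X
    simpa using congrArg ((cokernel.π σ.arrow).app X ≫ ·)
      ((cokernel.π τ.arrow ≫ eτ.hom).naturality (eσ.hom.app X))
  rw [key, kernelSubobject_comp_mono]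
  rfl

lemma preradDelta_eq_mk (τ : Subobject (𝟭 A)) :
    preradDelta τ = Subobject.mk (NatTrans.op (cokernel.π τ.arrow)) :=
  imageSubobject_mono _

lemma preradDelta_eq_mk_of_isColimit {τ : Subobject (𝟭 A)} {G : A ⥤ A} (p : 𝟭 A ⟶ G) [Epi p]
    {w : τ.arrow ≫ p = 0} (hp : IsColimit (CokernelCofork.ofπ p w)) :
    preradDelta τ = Subobject.mk (NatTrans.op p) := by
  let e := IsColimit.coconePointUniqueUpToIso (colimit.isColimit _) hp
  have he : cokernel.π τ.arrow ≫ e.hom = p :=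
    IsColimit.comp_coconePointUniqueUpToIso_hom _ hp WalkingParallelPair.one
  refine ((preradDelta_eq_mk τ).trans (mk_eq_mk_of_comm _ _ (NatIso.op e) ?_).symm)
  rw [NatIso.op_hom, ← NatTrans.op_comp, he]

lemma preradDelta_kernelSubobject {G : A ⥤ A} (k : 𝟭 A ⟶ G) [Epi k] :
    preradDelta (kernelSubobject k) = Subobject.mk (NatTrans.op k) :=
  preradDelta_eq_mk_of_isColimit k (isColimitCokernelCoforkMkArrow (kernel.ι k)
    (Abelian.epiIsCokernelOfKernel _ (limit.isLimit _)))

lemma preradDelta_mk {F : A ⥤ A} (m : F ⟶ 𝟭 A) [Mono m] :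
    preradDelta (Subobject.mk m) = Subobject.mk (NatTrans.op (cokernel.π m)) :=
  preradDelta_eq_mk_of_isColimit (cokernel.π m)
    (isColimitCokernelCoforkMkArrow m (colimit.isColimit _))

noncomputable def isColimitCokernelCoforkOpArrow (τ : Subobject (𝟭 A)) :
    IsColimit (CokernelCofork.ofπ (NatTrans.op τ.arrow)
      (by rw [← underlyingIso_hom_comp_eq_mk, Category.assoc, ← NatTrans.op_comp,
        cokernel.condition, NatTrans.op_zero, comp_zero]) :
      CokernelCofork (Subobject.mk (NatTrans.op (cokernel.π τ.arrow))).arrow) :=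
  isColimitCokernelCoforkMkArrow (NatTrans.op (cokernel.π τ.arrow))
    (NatTrans.isColimitCokernelCoforkOp (Abelian.monoIsKernelOfCokernel _ (colimit.isColimit _)))

theorem preradDelta_preradCoprod (τ σ : Subobject (𝟭 A)) :
    preradDelta (preradCoprod σ τ) = preradProd (preradDelta τ) (preradDelta σ) := by
  rw [preradDelta_eq_mk τ, preradDelta_eq_mk σ, preradProd_mk]
  exact preradDelta_kernelSubobject _

theorem preradDelta_preradProd (τ σ : Subobject (𝟭 A)) :
    preradDelta (preradProd τ σ) = preradCoprod (preradDelta σ) (preradDelta τ) := by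
  rw [preradProd_eq_mk, preradDelta_mk, preradDelta_eq_mk σ, preradDelta_eq_mk τ,
    preradCoprod_eq_kernelSubobject (isColimitCokernelCoforkOpArrow σ)
      (isColimitCokernelCoforkOpArrow τ)]
  exact (kernelSubobject_eq_mk_of_isLimit (NatTrans.op (cokernel.π _))
    (NatTrans.isLimitKernelForkOp (colimit.isColimit _))).symm

/-- `Δ(σ:τ) = Δ(τ)·Δ(σ)` and `Δ(τ·σ) = (Δ(σ):Δ(τ))`. -/
theorem preradDelta_coprod_prod (τ σ : Subobject (𝟭 A)) :
    preradDelta (preradCoprod σ τ) = preradProd (preradDelta τ) (preradDelta σ) ∧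
      preradDelta (preradProd τ σ) = preradCoprod (preradDelta σ) (preradDelta τ) :=
  ⟨preradDelta_preradCoprod τ σ, preradDelta_preradProd τ σ⟩
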